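/- Let f, g ∈ R⟨X⟩ be polynomials compatible with the labelled quiver Q. If s(f) ∩ t(g) ≠ ∅, then the product fg is compatible with Q and σ(fg) ⊇ {(u,w) ∈ s(g) × t(f) | there exists v ∈ s(f) ∩ t(g) with (u,v) ∈ σ(g) and (v,w) ∈ σ(f)}. -/

import Mathlib

open scoped BigOperators

universe u₁ u₂ u₃ u₄ u₅

/-- A labelled quiver: a directed multigraph with edges labelled in `X`. -/
structure LQuiver (V : Type u₁) (E : Type u₂) (X : Type u₃) where
  src : E → V
  tgt : E → V
  lab : E → X

namespace LQuiver

variable {V : Type u₁} {E : Type u₂} {X : Type u₃}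

/-- Paths in the quiver (possibly empty). -/
inductive Walk (Q : LQuiver V E X) : V → V → Type (max u₁ u₂)
  | nil (v : V) : Walk Q v v
  | cons {u : V} (e : E) (p : Walk Q u (Q.src e)) : Walk Q u (Q.tgt e)

/-- The label of a path, a word in the free monoid `⟨X⟩`. -/
def wlabel (Q : LQuiver V E X) : ∀ {u v : V}, Q.Walk u v → FreeMonoid X
  | _, _, .nil _ => 1
  | _, _, .cons e p => FreeMonoid.of (Q.lab e) * Q.wlabel p

/-- The signature `σ(m)` of a monomial (word) `m`. -/
def sigW (Q : LQuiver V E X) (m : FreeMonoid X) : Set (V × V) :=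
  {p : V × V | ∃ w : Q.Walk p.1 p.2, Q.wlabel w = m}

variable {R : Type u₄} [CommRing R]

/-- The signature `σ(f)` of a noncommutative polynomial `f ∈ R⟨X⟩`. -/
def sig (Q : LQuiver V E X) (f : MonoidAlgebra R (FreeMonoid X)) : Set (V × V) :=
  ⋂ m ∈ f.coeff.support, Q.sigW m

/-- A polynomial is compatible with `Q` if its signature is nonempty. -/
def Compatible (Q : LQuiver V E X) (f : MonoidAlgebra R (FreeMonoid X)) : Prop :=
  (Q.sig f).Nonempty

/-- The projection `s(f)` of `σ(f)` on sources. -/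
def srcSet (Q : LQuiver V E X) (f : MonoidAlgebra R (FreeMonoid X)) : Set V :=
  Prod.fst '' Q.sig f

/-- The projection `t(f)` of `σ(f)` on targets. -/
def tgtSet (Q : LQuiver V E X) (f : MonoidAlgebra R (FreeMonoid X)) : Set V :=
  Prod.snd '' Q.sig f

/-- `f` is a `Q`-consequence of `F`. -/
def QConsequence (Q : LQuiver V E X) (F : Set (MonoidAlgebra R (FreeMonoid X)))
    (f : MonoidAlgebra R (FreeMonoid X)) : Prop :=
  Q.Compatible f ∧
  ∃ (n : ℕ) (g a b : Fin n → MonoidAlgebra R (FreeMonoid X)),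
    (∀ i, g i ∈ F) ∧
    f = ∑ i, a i * g i * b i ∧
    ∀ uv ∈ Q.sig f, ∀ i, ∃ ui vi : V,
      (uv.1, ui) ∈ Q.sig (b i) ∧ (ui, vi) ∈ Q.sig (g i) ∧ (vi, uv.2) ∈ Q.sig (a i)

end LQuiver

/-- The monomial `m` regarded as a polynomial in `R⟨X⟩`. -/
noncomputable def mono (R : Type u₄) [CommRing R] {X : Type u₃} (m : FreeMonoid X) :
    MonoidAlgebra R (FreeMonoid X) :=
  MonoidAlgebra.single m 1

/-- One rewriting step with divisor monomials selected by `DM`. -/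
def RewriteStep {R : Type u₄} [CommRing R] {X : Type u₃}
    (G : Set (MonoidAlgebra R (FreeMonoid X)))
    (DM : MonoidAlgebra R (FreeMonoid X) → Set (FreeMonoid X))
    (f h : MonoidAlgebra R (FreeMonoid X)) : Prop :=
  ∃ g ∈ G, ∃ m ∈ DM g, ∃ a b : FreeMonoid X, ∃ lam : R,
    a * m * b ∈ f.coeff.support ∧ h = f + lam • (mono R a * g * mono R b)

/-- A monomial order: a well-founded linear order compatible with multiplication. -/
def IsMonomialOrder {X : Type u₃} (ord : LinearOrder (FreeMonoid X)) : Prop :=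
  WellFounded ord.lt ∧
    ∀ a b m m' : FreeMonoid X, ord.le m m' → ord.le (a * m * b) (a * m' * b)

/-- The leading monomial of a polynomial w.r.t. a linear order on monomials
(defined as `1` for the zero polynomial). -/
noncomputable def LM {K : Type u₄} [CommRing K] {X : Type u₃}
    (ord : LinearOrder (FreeMonoid X)) (f : MonoidAlgebra K (FreeMonoid X)) : FreeMonoid X :=
  letI := ord
  letI : Decidable (f = 0) := Classical.dec _
  if h : f = 0 then 1 else f.coeff.support.max'
    (Finsupp.support_nonempty_iff.mpr (fun h' => h (congrArg MonoidAlgebra.ofCoeff h')))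

/-- One step of standard polynomial reduction w.r.t. a set `G` and a monomial order. -/
def ReduceStep {K : Type u₄} [Field K] {X : Type u₃} (ord : LinearOrder (FreeMonoid X))
    (G : Set (MonoidAlgebra K (FreeMonoid X)))
    (f h : MonoidAlgebra K (FreeMonoid X)) : Prop :=
  ∃ g ∈ G, g ≠ 0 ∧ ∃ a b : FreeMonoid X,
    a * LM ord g * b ∈ f.coeff.support ∧
    h = f - (f.coeff (a * LM ord g * b) / g.coeff (LM ord g)) • (mono K a * g * mono K b)

/-- `f` is `Q`-order compatible w.r.t. the order `ord`. -/
def QOrderCompatible {V : Type u₁} {E : Type u₂} {X : Type u₃} {K : Type u₄} [CommRing K]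
    (Q : LQuiver V E X) (ord : LinearOrder (FreeMonoid X))
    (f : MonoidAlgebra K (FreeMonoid X)) : Prop :=
  Q.Compatible f ∧ Q.sigW (LM ord f) = Q.sig f

/-- A representation of a labelled quiver. -/
structure QRep (R : Type u₄) [CommRing R] {V : Type u₁} {E : Type u₂} {X : Type u₃}
    (Q : LQuiver V E X) where
  M : V → Type u₅
  [addcg : ∀ v, AddCommGroup (M v)]
  [mod : ∀ v, Module R (M v)]
  φ : (e : E) → M (Q.src e) →ₗ[R] M (Q.tgt e)

attribute [instance] QRep.addcg QRep.mod

namespace QRep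

variable {R : Type u₄} [CommRing R] {V : Type u₁} {E : Type u₂} {X : Type u₃}
  {Q : LQuiver V E X}

/-- The linear map induced by a path. -/
def walkMap (ρ : QRep R Q) : ∀ {u v : V}, Q.Walk u v → (ρ.M u →ₗ[R] ρ.M v)
  | _, _, .nil _ => LinearMap.id
  | _, _, .cons e p => (ρ.φ e).comp (ρ.walkMap p)

/-- The representation is consistent with the labelling: two paths with the same
source, target and label induce the same linear map. -/
def Consistent (ρ : QRep R Q) : Prop :=
  ∀ (u v : V) (p q : Q.Walk u v), Q.wlabel p = Q.wlabel q → ρ.walkMap p = ρ.walkMap q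

/-- The realization `φ_{v,w}(f)` of a polynomial `f` (for a consistent representation and
`(v,w) ∈ σ(f)`, this is the well-defined linear map of the paper). -/
noncomputable def real (ρ : QRep R Q) (v w : V) (f : MonoidAlgebra R (FreeMonoid X)) :
    ρ.M v →ₗ[R] ρ.M w :=
  ∑ m ∈ f.coeff.support, f.coeff m •
    (letI : Decidable (∃ p : Q.Walk v w, Q.wlabel p = m) := Classical.dec _
     if h : ∃ p : Q.Walk v w, Q.wlabel p = m then ρ.walkMap h.choose else 0)

end QRep

namespace LQuiver

variable {V E X : Type*} {Q : LQuiver V E X}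

def Walk.append : ∀ {u v w : V}, Q.Walk u v → Q.Walk v w → Q.Walk u w
  | _, _, _, p, .nil _ => p
  | _, _, _, p, .cons e q => .cons e (p.append q)

theorem wlabel_append {u v w : V} (p : Q.Walk u v) (q : Q.Walk v w) :
    Q.wlabel (p.append q) = Q.wlabel q * Q.wlabel p := by
  induction q with
  | nil => simp [Walk.append, wlabel]
  | cons e q ih => simp [Walk.append, wlabel, ih, mul_assoc]

theorem mem_sigW_mul {a b : FreeMonoid X} {u v w : V}
    (hb : (u, v) ∈ Q.sigW b) (ha : (v, w) ∈ Q.sigW a) : (u, w) ∈ Q.sigW (a * b) := by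
  obtain ⟨q, rfl⟩ := hb
  obtain ⟨p, rfl⟩ := ha
  exact ⟨q.append p, wlabel_append q p⟩

/-- Every monomial of `f * g` is a product of a monomial of `f` and one of `g`. -/
theorem mem_sig_mul {R : Type*} [CommRing R] {f g : MonoidAlgebra R (FreeMonoid X)}
    {u v w : V} (hg : (u, v) ∈ Q.sig g) (hf : (v, w) ∈ Q.sig f) :
    (u, w) ∈ Q.sig (f * g) := by
  classical
  refine Set.mem_iInter₂.mpr fun m hm => ?_
  obtain ⟨a, ha, b, hb, rfl⟩ := Finset.mem_mul.mp (MonoidAlgebra.support_coeff_mul_subset f g hm)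
  exact mem_sigW_mul (Set.mem_iInter₂.mp hg b hb) (Set.mem_iInter₂.mp hf a ha)

end LQuiver

theorem sig_mul_of_inter_nonempty_general {V E X R : Type*} [CommRing R] (Q : LQuiver V E X)
    (f g : MonoidAlgebra R (FreeMonoid X))
    (h : (Q.srcSet f ∩ Q.tgtSet g).Nonempty) :
    Q.Compatible (f * g) ∧
      {uw : V × V | uw.1 ∈ Q.srcSet g ∧ uw.2 ∈ Q.tgtSet f ∧
          ∃ v ∈ Q.srcSet f ∩ Q.tgtSet g, (uw.1, v) ∈ Q.sig g ∧ (v, uw.2) ∈ Q.sig f}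
        ⊆ Q.sig (f * g) := by
  obtain ⟨_, ⟨⟨v, w⟩, hf, rfl⟩, ⟨⟨u, _⟩, hg, rfl⟩⟩ := h
  refine ⟨⟨(u, w), LQuiver.mem_sig_mul hg hf⟩, ?_⟩
  rintro ⟨u, w⟩ ⟨-, -, v, -, hg, hf⟩
  exact LQuiver.mem_sig_mul hg hf

/-- If `s(f) ∩ t(g) ≠ ∅`, then `fg` is compatible with `Q` and its signature
contains the indicated set. -/
theorem sig_mul_of_inter_nonempty {V E X R : Type*} [CommRing R] (Q : LQuiver V E X)
    (f g : MonoidAlgebra R (FreeMonoid X))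
    (hf : Q.Compatible f) (hg : Q.Compatible g)
    (h : (Q.srcSet f ∩ Q.tgtSet g).Nonempty) :
    Q.Compatible (f * g) ∧
      {uw : V × V | uw.1 ∈ Q.srcSet g ∧ uw.2 ∈ Q.tgtSet f ∧
          ∃ v ∈ Q.srcSet f ∩ Q.tgtSet g, (uw.1, v) ∈ Q.sig g ∧ (v, uw.2) ∈ Q.sig f}
        ⊆ Q.sig (f * g) :=
  sig_mul_of_inter_nonempty_general Q f g h
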